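/- Let γ(s,t) be an arclength-parametrized inextensible flow of pseudo null curves in E⁴₁ with pseudo null Frenet frame {T, N, B₁, B₂}, curvatures k₁ = 1, k₂, k₃, and flow ∂γ/∂t = α₁T + α₂N + α₃B₁ + α₄B₂ (so ∂α₁/∂s = α₄). Then ∂²α₄/∂s² − ∂(α₃k₂)/∂s − (∂α₃/∂s)k₂ − α₂k₂² + α₄k₂k₃ = 0. -/

import Mathlib

/-!
Write `V = ∂γ/∂t`. Since `T = ∂γ/∂s` and the partial derivatives commute, `∂T/∂t = ∂V/∂s`, so
for every frame vector `E` with `⟨T, E⟩ = 0` differentiating in `t` and `s` gives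
`⟨∂E/∂t, T⟩ = ⟨V, ∂E/∂s⟩ - ∂⟨V, E⟩/∂s`. The pairings of `V` with `N`, `B₁`, `B₂` are `α₄`, `α₃`,
`α₂`, so the Frenet equations give `⟨∂N/∂t, T⟩ = α₃k₂ - ∂α₄/∂s` and
`⟨∂B₁/∂t, T⟩ = k₃α₄ - k₂α₂ - ∂α₃/∂s`. Finally `∂/∂s ∂N/∂t = ∂/∂t (k₂B₁)`, and pairing with `T`
(using `⟨∂N/∂t, N⟩ = 0` and `⟨B₁, T⟩ = 0`) gives `∂⟨∂N/∂t, T⟩/∂s = k₂⟨∂B₁/∂t, T⟩`, which is the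
claimed identity.
-/

noncomputable section

/-- The Minkowski bilinear form on `ℝ⁴` with signature `(-,+,+,+)`. -/
def mink (v w : Fin 4 → ℝ) : ℝ :=
  -(v 0 * w 0) + v 1 * w 1 + v 2 * w 2 + v 3 * w 3

/-- The Minkowski norm `‖v‖ = √|⟨v,v⟩|`. -/
def mnorm (v : Fin 4 → ℝ) : ℝ := Real.sqrt |mink v v|

section PartialDeriv

variable {E : Type*} [NormedAddCommGroup E] [NormedSpace ℝ E] {f : ℝ → ℝ → E} {s t : ℝ}
  {n m : WithTop ℕ∞}

theorem hasDerivAt_partial_fst (hf : DifferentiableAt ℝ (fun p : ℝ × ℝ => f p.1 p.2) (s, t)) :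
    HasDerivAt (fun x => f x t) (fderiv ℝ (fun p : ℝ × ℝ => f p.1 p.2) (s, t) (1, 0)) s :=
  hf.hasFDerivAt.comp_hasDerivAt (f := fun x : ℝ => (x, t)) s
    ((hasDerivAt_id s).prodMk (hasDerivAt_const s t))

theorem hasDerivAt_partial_snd (hf : DifferentiableAt ℝ (fun p : ℝ × ℝ => f p.1 p.2) (s, t)) :
    HasDerivAt (fun x => f s x) (fderiv ℝ (fun p : ℝ × ℝ => f p.1 p.2) (s, t) (0, 1)) t :=
  hf.hasFDerivAt.comp_hasDerivAt (f := fun x : ℝ => (s, x)) t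
    ((hasDerivAt_const t s).prodMk (hasDerivAt_id t))

theorem ContDiff.differentiableAt_partial_fst (hf : ContDiff ℝ n (fun p : ℝ × ℝ => f p.1 p.2))
    (hn : n ≠ 0) (s t : ℝ) : DifferentiableAt ℝ (fun x => f x t) s :=
  (hasDerivAt_partial_fst (hf.differentiable hn _)).differentiableAt

theorem ContDiff.differentiableAt_partial_snd (hf : ContDiff ℝ n (fun p : ℝ × ℝ => f p.1 p.2))
    (hn : n ≠ 0) (s t : ℝ) : DifferentiableAt ℝ (fun x => f s x) t :=
  (hasDerivAt_partial_snd (hf.differentiable hn _)).differentiableAt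

theorem ContDiff.partial_fst (hf : ContDiff ℝ (m + 1) (fun p : ℝ × ℝ => f p.1 p.2)) :
    ContDiff ℝ m (fun p : ℝ × ℝ => deriv (fun x => f x p.2) p.1) := by
  have hd := hf.differentiable (by simp)
  simp_rw [fun p : ℝ × ℝ => (hasDerivAt_partial_fst (hd p)).deriv]
  exact (hf.fderiv_right le_rfl).clm_apply contDiff_const

theorem ContDiff.partial_snd (hf : ContDiff ℝ (m + 1) (fun p : ℝ × ℝ => f p.1 p.2)) :
    ContDiff ℝ m (fun p : ℝ × ℝ => deriv (fun x => f p.1 x) p.2) := by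
  have hd := hf.differentiable (by simp)
  simp_rw [fun p : ℝ × ℝ => (hasDerivAt_partial_snd (hd p)).deriv]
  exact (hf.fderiv_right le_rfl).clm_apply contDiff_const

theorem ContDiff.differentiableAt_deriv_partial_fst
    (hf : ContDiff ℝ 2 (fun p : ℝ × ℝ => f p.1 p.2)) (s t : ℝ) :
    DifferentiableAt ℝ (fun y => deriv (fun x => f x t) y) s :=
  ContDiff.differentiableAt_partial_fst (f := fun y t => deriv (fun x => f x t) y)
    hf.partial_fst one_ne_zero s t

theorem ContDiff.differentiableAt_fst_deriv_partial_snd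
    (hf : ContDiff ℝ 2 (fun p : ℝ × ℝ => f p.1 p.2)) (s t : ℝ) :
    DifferentiableAt ℝ (fun y => deriv (fun x => f y x) t) s :=
  hf.partial_snd.differentiableAt_partial_fst one_ne_zero s t

theorem fderiv_fderiv_apply {F : ℝ × ℝ → E} {p : ℝ × ℝ} (hF : DifferentiableAt ℝ (fderiv ℝ F) p)
    (v w : ℝ × ℝ) : fderiv ℝ (fun q => fderiv ℝ F q v) p w = fderiv ℝ (fderiv ℝ F) p w v := by
  simp [fderiv_clm_apply hF (differentiableAt_const v)]

theorem ContDiff.deriv_partial_comm (hf : ContDiff ℝ 2 (fun p : ℝ × ℝ => f p.1 p.2)) (s t : ℝ) :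
    deriv (fun y => deriv (fun x => f y x) t) s = deriv (fun x => deriv (fun y => f y x) s) t := by
  set F : ℝ × ℝ → E := fun p => f p.1 p.2
  have hF : Differentiable ℝ F := hf.differentiable two_ne_zero
  have hF' : Differentiable ℝ (fderiv ℝ F) :=
    (hf.fderiv_right (m := 1) le_rfl).differentiable one_ne_zero
  have happly (v : ℝ × ℝ) : Differentiable ℝ (fun q => fderiv ℝ F q v) :=
    fun q => (hF' q).clm_apply (differentiableAt_const v)
  have hsymm : IsSymmSndFDerivAt ℝ F (s, t) :=
    hf.contDiffAt.isSymmSndFDerivAt (by simp [minSmoothness_of_isRCLikeNormedField])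
  calc deriv (fun y => deriv (fun x => f y x) t) s
      = fderiv ℝ (fun q => fderiv ℝ F q (0, 1)) (s, t) (1, 0) := by
        simp_rw [fun y => (hasDerivAt_partial_snd (hF (y, t))).deriv]
        exact (hasDerivAt_partial_fst (f := fun y x => fderiv ℝ F (y, x) (0, 1)) (happly _ _)).deriv
    _ = fderiv ℝ (fun q => fderiv ℝ F q (1, 0)) (s, t) (0, 1) := by
        rw [fderiv_fderiv_apply (hF' _), fderiv_fderiv_apply (hF' _), hsymm]
    _ = deriv (fun x => deriv (fun y => f y x) s) t := by
        simp_rw [fun x => (hasDerivAt_partial_fst (hF (s, x))).deriv]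
        exact (hasDerivAt_partial_snd (f := fun y x => fderiv ℝ F (y, x) (1, 0))
          (happly _ _)).deriv.symm

end PartialDeriv

section Minkowski

theorem mink_comm (u v : Fin 4 → ℝ) : mink u v = mink v u := by
  simp only [mink]; ring

theorem mink_add_left (u v w : Fin 4 → ℝ) : mink (u + v) w = mink u w + mink v w := by
  simp only [mink, Pi.add_apply]; ring

theorem mink_smul_left (a : ℝ) (u w : Fin 4 → ℝ) : mink (a • u) w = a * mink u w := by
  simp only [mink, Pi.smul_apply, smul_eq_mul]; ring

theorem mink_sub_right (u v w : Fin 4 → ℝ) : mink u (v - w) = mink u v - mink u w := by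
  simp only [mink, Pi.sub_apply]; ring

theorem mink_smul_right (a : ℝ) (u w : Fin 4 → ℝ) : mink u (a • w) = a * mink u w := by
  simp only [mink, Pi.smul_apply, smul_eq_mul]; ring

theorem HasDerivAt.mink {u v : ℝ → Fin 4 → ℝ} {u' v' : Fin 4 → ℝ} {x : ℝ}
    (hu : HasDerivAt u u' x) (hv : HasDerivAt v v' x) :
    HasDerivAt (fun y => mink (u y) (v y)) (mink u' (v x) + mink (u x) v') x := by
  have hu' (i : Fin 4) : HasDerivAt (fun y => u y i) (u' i) x := hasDerivAt_pi.1 hu i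
  have hv' (i : Fin 4) : HasDerivAt (fun y => v y i) (v' i) x := hasDerivAt_pi.1 hv i
  refine (((((hu' 0).mul (hv' 0)).neg.add ((hu' 1).mul (hv' 1))).add
    ((hu' 2).mul (hv' 2))).add ((hu' 3).mul (hv' 3))).congr_deriv ?_
  simp only [_root_.mink]; ring

theorem mink_deriv_left {u v : ℝ → Fin 4 → ℝ} {x : ℝ} (hu : DifferentiableAt ℝ u x)
    (hv : DifferentiableAt ℝ v x) :
    mink (deriv u x) (v x) = deriv (fun y => mink (u y) (v y)) x - mink (u x) (deriv v x) := by
  rw [(hu.hasDerivAt.mink hv.hasDerivAt).deriv]; ring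

theorem mink_deriv_eq_neg_of_const {u v : ℝ → Fin 4 → ℝ} {x c : ℝ} (hu : DifferentiableAt ℝ u x)
    (hv : DifferentiableAt ℝ v x) (h : ∀ y, mink (u y) (v y) = c) :
    mink (deriv v x) (u x) = -mink (deriv u x) (v x) := by
  rw [mink_deriv_left hu hv, mink_comm]
  simp only [h, deriv_const', zero_sub, neg_neg]

section PseudoNullFrame

variable {T N B₁ B₂ : Fin 4 → ℝ} (a b c d : ℝ)

theorem mink_pseudoNull_N (hTN : mink T N = 0) (hNN : mink N N = 0) (hNB₁ : mink N B₁ = 0)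
    (hNB₂ : mink N B₂ = 1) : mink (a • T + b • N + c • B₁ + d • B₂) N = d := by
  simp only [mink_add_left, mink_smul_left, mink_comm B₁ N, mink_comm B₂ N, hTN, hNN, hNB₁, hNB₂]
  ring

theorem mink_pseudoNull_B₁ (hTB₁ : mink T B₁ = 0) (hNB₁ : mink N B₁ = 0) (hB₁B₁ : mink B₁ B₁ = 1)
    (hB₁B₂ : mink B₁ B₂ = 0) : mink (a • T + b • N + c • B₁ + d • B₂) B₁ = c := by
  simp only [mink_add_left, mink_smul_left, mink_comm B₂ B₁, hTB₁, hNB₁, hB₁B₁, hB₁B₂]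
  ring

theorem mink_pseudoNull_B₂ (hTB₂ : mink T B₂ = 0) (hNB₂ : mink N B₂ = 1) (hB₁B₂ : mink B₁ B₂ = 0)
    (hB₂B₂ : mink B₂ B₂ = 0) : mink (a • T + b • N + c • B₁ + d • B₂) B₂ = b := by
  simp only [mink_add_left, mink_smul_left, hTB₂, hNB₂, hB₁B₂, hB₂B₂]
  ring

end PseudoNullFrame

end Minkowski

section FrameVariation

variable {γ T N B₁ E : ℝ → ℝ → Fin 4 → ℝ}

theorem mink_deriv_snd_of_orthogonal_tangent (hγ : ContDiff ℝ 2 (fun p : ℝ × ℝ => γ p.1 p.2))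
    (hT : ContDiff ℝ 1 (fun p : ℝ × ℝ => T p.1 p.2))
    (hE : ContDiff ℝ 1 (fun p : ℝ × ℝ => E p.1 p.2))
    (hTγ : ∀ s t, T s t = deriv (fun x => γ x t) s) (hTE : ∀ s t, mink (T s t) (E s t) = 0)
    (s t : ℝ) :
    mink (deriv (fun x => E s x) t) (T s t) =
      mink (deriv (fun y => γ s y) t) (deriv (fun x => E x t) s) -
        deriv (fun x => mink (deriv (fun y => γ x y) t) (E x t)) s := by
  have hTt : deriv (fun x => T s x) t = deriv (fun y => deriv (fun x => γ y x) t) s := by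
    simp_rw [hTγ]
    exact (hγ.deriv_partial_comm s t).symm
  rw [mink_deriv_eq_neg_of_const (hT.differentiableAt_partial_snd one_ne_zero s t)
    (hE.differentiableAt_partial_snd one_ne_zero s t) (hTE s), hTt,
    mink_deriv_left (hγ.differentiableAt_fst_deriv_partial_snd s t)
      (hE.differentiableAt_partial_fst one_ne_zero s t)]
  ring

theorem deriv_mink_deriv_snd_normal_tangent {k₁ k₂ : ℝ → ℝ → ℝ}
    (hT : ContDiff ℝ 1 (fun p : ℝ × ℝ => T p.1 p.2))
    (hN : ContDiff ℝ 2 (fun p : ℝ × ℝ => N p.1 p.2))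
    (hB₁ : ContDiff ℝ 1 (fun p : ℝ × ℝ => B₁ p.1 p.2))
    (hk₂ : ContDiff ℝ 1 (fun p : ℝ × ℝ => k₂ p.1 p.2))
    (hNN : ∀ s t, mink (N s t) (N s t) = 0) (hTB₁ : ∀ s t, mink (T s t) (B₁ s t) = 0)
    (hfr₁ : ∀ s t, deriv (fun x => T x t) s = k₁ s t • N s t)
    (hfr₂ : ∀ s t, deriv (fun x => N x t) s = k₂ s t • B₁ s t) (s t : ℝ) :
    deriv (fun y => mink (deriv (fun x => N y x) t) (T y t)) s =
      k₂ s t * mink (deriv (fun x => B₁ s x) t) (T s t) := by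
  have hdN := hN.differentiableAt_partial_snd two_ne_zero s t
  have hNtN : mink (deriv (fun x => N s x) t) (N s t) = 0 := by
    linarith [mink_deriv_eq_neg_of_const hdN hdN (hNN s)]
  have hNts : deriv (fun y => deriv (fun x => N y x) t) s =
      k₂ s t • deriv (fun x => B₁ s x) t + deriv (fun x => k₂ s x) t • B₁ s t := by
    rw [hN.deriv_partial_comm]
    simp_rw [hfr₂]
    exact deriv_smul (hk₂.differentiableAt_partial_snd one_ne_zero s t)
      (hB₁.differentiableAt_partial_snd one_ne_zero s t)
  have key := mink_deriv_left (u := fun y => deriv (fun x => N y x) t) (v := fun y => T y t)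
    (hN.differentiableAt_fst_deriv_partial_snd s t)
    (hT.differentiableAt_partial_fst one_ne_zero s t)
  simp only [hNts, hfr₁, mink_add_left, mink_smul_left, mink_smul_right, mink_comm (B₁ s t),
    hTB₁, hNtN] at key
  linarith

end FrameVariation

theorem pde_B2_component_pseudo_null_general
    (γ T N B₁ B₂ : ℝ → ℝ → (Fin 4 → ℝ))
    (k₁ k₂ k₃ α₁ α₂ α₃ α₄ : ℝ → ℝ → ℝ)
    (hγsmooth : ContDiff ℝ (⊤ : ℕ∞) (fun p : ℝ × ℝ => γ p.1 p.2))
    (hTsmooth : ContDiff ℝ (⊤ : ℕ∞) (fun p : ℝ × ℝ => T p.1 p.2))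
    (hNsmooth : ContDiff ℝ (⊤ : ℕ∞) (fun p : ℝ × ℝ => N p.1 p.2))
    (hB₁smooth : ContDiff ℝ (⊤ : ℕ∞) (fun p : ℝ × ℝ => B₁ p.1 p.2))
    (hk₂smooth : ContDiff ℝ (⊤ : ℕ∞) (fun p : ℝ × ℝ => k₂ p.1 p.2))
    (hα₃smooth : ContDiff ℝ (⊤ : ℕ∞) (fun p : ℝ × ℝ => α₃ p.1 p.2))
    (hα₄smooth : ContDiff ℝ (⊤ : ℕ∞) (fun p : ℝ × ℝ => α₄ p.1 p.2))
    (hB₁B₁ : ∀ s t : ℝ, mink (B₁ s t) (B₁ s t) = 1)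
    (hNN : ∀ s t : ℝ, mink (N s t) (N s t) = 0)
    (hB₂B₂ : ∀ s t : ℝ, mink (B₂ s t) (B₂ s t) = 0)
    (hNB₂ : ∀ s t : ℝ, mink (N s t) (B₂ s t) = 1)
    (hTN : ∀ s t : ℝ, mink (T s t) (N s t) = 0)
    (hTB₁ : ∀ s t : ℝ, mink (T s t) (B₁ s t) = 0)
    (hTB₂ : ∀ s t : ℝ, mink (T s t) (B₂ s t) = 0)
    (hNB₁ : ∀ s t : ℝ, mink (N s t) (B₁ s t) = 0)
    (hB₁B₂ : ∀ s t : ℝ, mink (B₁ s t) (B₂ s t) = 0)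
    -- arclength parametrization and pseudo null Frenet equations (k₁ = 1)
    (hT : ∀ s t : ℝ, T s t = deriv (fun x => γ x t) s)
    (hfr₁ : ∀ s t : ℝ, deriv (fun x => T x t) s = k₁ s t • N s t)
    (hfr₂ : ∀ s t : ℝ, deriv (fun x => N x t) s = k₂ s t • B₁ s t)
    (hfr₃ : ∀ s t : ℝ, deriv (fun x => B₁ x t) s = k₃ s t • N s t - k₂ s t • B₂ s t)
    (hflow : ∀ s t : ℝ, deriv (fun x => γ s x) t =
      α₁ s t • T s t + α₂ s t • N s t + α₃ s t • B₁ s t + α₄ s t • B₂ s t) :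
    ∀ s t : ℝ,
      deriv (fun x => deriv (fun y => α₄ y t) x) s - deriv (fun x => α₃ x t * k₂ x t) s -
      deriv (fun x => α₃ x t) s * k₂ s t - α₂ s t * (k₂ s t) ^ 2 +
      α₄ s t * k₂ s t * k₃ s t = 0 := by
  intro s t
  have h1 : (1 : WithTop ℕ∞) ≤ ((⊤ : ℕ∞) : WithTop ℕ∞) := WithTop.coe_le_coe.2 le_top
  have h2 : (2 : WithTop ℕ∞) ≤ ((⊤ : ℕ∞) : WithTop ℕ∞) := WithTop.coe_le_coe.2 le_top
  have hvN (y : ℝ) : mink (deriv (fun x => γ y x) t) (N y t) = α₄ y t := by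
    rw [hflow]; exact mink_pseudoNull_N _ _ _ _ (hTN y t) (hNN y t) (hNB₁ y t) (hNB₂ y t)
  have hvB₁ (y : ℝ) : mink (deriv (fun x => γ y x) t) (B₁ y t) = α₃ y t := by
    rw [hflow]; exact mink_pseudoNull_B₁ _ _ _ _ (hTB₁ y t) (hNB₁ y t) (hB₁B₁ y t) (hB₁B₂ y t)
  have hvB₂ : mink (deriv (fun x => γ s x) t) (B₂ s t) = α₂ s t := by
    rw [hflow]; exact mink_pseudoNull_B₂ _ _ _ _ (hTB₂ s t) (hNB₂ s t) (hB₁B₂ s t) (hB₂B₂ s t)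
  have hNtT (y : ℝ) : mink (deriv (fun x => N y x) t) (T y t) =
      α₃ y t * k₂ y t - deriv (fun x => α₄ x t) y := by
    rw [mink_deriv_snd_of_orthogonal_tangent (hγsmooth.of_le h2) (hTsmooth.of_le h1)
      (hNsmooth.of_le h1) hT hTN, hfr₂, mink_smul_right, hvB₁]
    simp_rw [hvN]; ring
  have hB₁tT : mink (deriv (fun x => B₁ s x) t) (T s t) =
      k₃ s t * α₄ s t - k₂ s t * α₂ s t - deriv (fun x => α₃ x t) s := by
    rw [mink_deriv_snd_of_orthogonal_tangent (hγsmooth.of_le h2) (hTsmooth.of_le h1)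
      (hB₁smooth.of_le h1) hT hTB₁, hfr₃, mink_sub_right, mink_smul_right, mink_smul_right, hvN,
      hvB₂]
    simp_rw [hvB₁]
  have hcompat := deriv_mink_deriv_snd_normal_tangent (hTsmooth.of_le h1) (hNsmooth.of_le h2)
    (hB₁smooth.of_le h1) (hk₂smooth.of_le h1) hNN hTB₁ hfr₁ hfr₂ s t
  have hdα₄' := (hα₄smooth.of_le h2).differentiableAt_deriv_partial_fst s t
  have hdα₃k₂ : DifferentiableAt ℝ (fun y => α₃ y t * k₂ y t) s :=
    (hα₃smooth.differentiableAt_partial_fst (by simp) s t).mul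
      (hk₂smooth.differentiableAt_partial_fst (by simp) s t)
  simp_rw [hNtT] at hcompat
  rw [hB₁tT, deriv_fun_sub hdα₃k₂ hdα₄'] at hcompat
  linear_combination -hcompat

theorem pde_B2_component_pseudo_null
    (γ T N B₁ B₂ : ℝ → ℝ → (Fin 4 → ℝ))
    (k₁ k₂ k₃ α₁ α₂ α₃ α₄ : ℝ → ℝ → ℝ)
    (hγsmooth : ContDiff ℝ (⊤ : ℕ∞) (fun p : ℝ × ℝ => γ p.1 p.2))
    (hTsmooth : ContDiff ℝ (⊤ : ℕ∞) (fun p : ℝ × ℝ => T p.1 p.2))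
    (hNsmooth : ContDiff ℝ (⊤ : ℕ∞) (fun p : ℝ × ℝ => N p.1 p.2))
    (hB₁smooth : ContDiff ℝ (⊤ : ℕ∞) (fun p : ℝ × ℝ => B₁ p.1 p.2))
    (hB₂smooth : ContDiff ℝ (⊤ : ℕ∞) (fun p : ℝ × ℝ => B₂ p.1 p.2))
    (hk₂smooth : ContDiff ℝ (⊤ : ℕ∞) (fun p : ℝ × ℝ => k₂ p.1 p.2))
    (hk₃smooth : ContDiff ℝ (⊤ : ℕ∞) (fun p : ℝ × ℝ => k₃ p.1 p.2))
    (hα₁smooth : ContDiff ℝ (⊤ : ℕ∞) (fun p : ℝ × ℝ => α₁ p.1 p.2))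
    (hα₂smooth : ContDiff ℝ (⊤ : ℕ∞) (fun p : ℝ × ℝ => α₂ p.1 p.2))
    (hα₃smooth : ContDiff ℝ (⊤ : ℕ∞) (fun p : ℝ × ℝ => α₃ p.1 p.2))
    (hα₄smooth : ContDiff ℝ (⊤ : ℕ∞) (fun p : ℝ × ℝ => α₄ p.1 p.2))
    (hTT : ∀ s t : ℝ, mink (T s t) (T s t) = 1)
    (hB₁B₁ : ∀ s t : ℝ, mink (B₁ s t) (B₁ s t) = 1)
    (hNN : ∀ s t : ℝ, mink (N s t) (N s t) = 0)
    (hB₂B₂ : ∀ s t : ℝ, mink (B₂ s t) (B₂ s t) = 0)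
    (hNB₂ : ∀ s t : ℝ, mink (N s t) (B₂ s t) = 1)
    (hTN : ∀ s t : ℝ, mink (T s t) (N s t) = 0)
    (hTB₁ : ∀ s t : ℝ, mink (T s t) (B₁ s t) = 0)
    (hTB₂ : ∀ s t : ℝ, mink (T s t) (B₂ s t) = 0)
    (hNB₁ : ∀ s t : ℝ, mink (N s t) (B₁ s t) = 0)
    (hB₁B₂ : ∀ s t : ℝ, mink (B₁ s t) (B₂ s t) = 0)
    -- arclength parametrization and pseudo null Frenet equations (k₁ = 1)
    (hk₁ : ∀ s t : ℝ, k₁ s t = 1)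
    (hT : ∀ s t : ℝ, T s t = deriv (fun x => γ x t) s)
    (hunit : ∀ s t : ℝ, mnorm (deriv (fun x => γ x t) s) = 1)
    (hfr₁ : ∀ s t : ℝ, deriv (fun x => T x t) s = k₁ s t • N s t)
    (hfr₂ : ∀ s t : ℝ, deriv (fun x => N x t) s = k₂ s t • B₁ s t)
    (hfr₃ : ∀ s t : ℝ, deriv (fun x => B₁ x t) s = k₃ s t • N s t - k₂ s t • B₂ s t)
    (hfr₄ : ∀ s t : ℝ, deriv (fun x => B₂ x t) s = -(k₁ s t) • T s t - k₃ s t • B₁ s t)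
    (hflow : ∀ s t : ℝ, deriv (fun x => γ s x) t =
      α₁ s t • T s t + α₂ s t • N s t + α₃ s t • B₁ s t + α₄ s t • B₂ s t)
    -- inextensibility: ∂α₁/∂s = α₄
    (hinext : ∀ s t : ℝ, deriv (fun x => α₁ x t) s = α₄ s t) :
    ∀ s t : ℝ,
      deriv (fun x => deriv (fun y => α₄ y t) x) s - deriv (fun x => α₃ x t * k₂ x t) s -
      deriv (fun x => α₃ x t) s * k₂ s t - α₂ s t * (k₂ s t) ^ 2 +
      α₄ s t * k₂ s t * k₃ s t = 0 :=
  pde_B2_component_pseudo_null_general γ T N B₁ B₂ k₁ k₂ k₃ α₁ α₂ α₃ α₄ hγsmooth hTsmooth hNsmooth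
    hB₁smooth hk₂smooth hα₃smooth hα₄smooth hB₁B₁ hNN hB₂B₂ hNB₂ hTN hTB₁ hTB₂ hNB₁ hB₁B₂ hT hfr₁
    hfr₂ hfr₃ hflow
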